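/- Fix ρ ∈ ℝ. The subset Λ'_{φ,ρ} ⊆ Λ_φ of elements whose Dirichlet series converges for every s ∈ ℂ with Re(s) > ρ is a subring of the Novikov ring, and for each such s the map ev_s : Λ'_{φ,ρ} → ℂ, f ↦ f̂(s), is a ring homomorphism. -/

import Mathlib

/-!
A function satisfying the Novikov condition has support on which `φ` is bounded below, so every
coefficient of a convolution `f * g` is a finite sum and the Novikov condition is stable under
convolution. A convergent series in `ℂ` converges absolutely, so where the Dirichlet series of `f`
and `g` converge, their product is the sum of the summable double family
`f a e^{-sφ(a)} · g b e^{-sφ(b)}`. Since `e^{-sφ(a+b)} = e^{-sφ(a)} e^{-sφ(b)}`, summing this family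
along the fibres `a + b = γ` gives the Dirichlet series of `f * g`.
-/

/-- The Novikov condition. -/
def NovikovCond {Γ : Type*} [AddCommGroup Γ] (φ : Γ →+ ℝ) (f : Γ → ℂ) : Prop :=
  ∀ R : ℝ, {γ : Γ | f γ ≠ 0 ∧ φ γ ≤ R}.Finite

/-- Convolution product. -/
noncomputable def novConv {Γ : Type*} [AddCommGroup Γ] (f g : Γ → ℂ) : Γ → ℂ :=
  fun γ => ∑ᶠ γ' : Γ, f γ' * g (γ - γ')

/-- Membership in the subring `Λ'_{φ,ρ}`. -/
def InLam' {Γ : Type*} [AddCommGroup Γ] (φ : Γ →+ ℝ) (ρ : ℝ) (f : Γ → ℂ) : Prop :=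
  NovikovCond φ f ∧
    ∀ s : ℂ, ρ < s.re → Summable fun γ : Γ => f γ * Complex.exp (-s * (φ γ : ℂ))

/-- Evaluation of the Dirichlet series at `s`. -/
noncomputable def novEv {Γ : Type*} [AddCommGroup Γ] (φ : Γ →+ ℝ) (s : ℂ)
    (f : Γ → ℂ) : ℂ :=
  ∑' γ : Γ, f γ * Complex.exp (-s * (φ γ : ℂ))

open Function

namespace NovikovCond

variable {Γ : Type*} [AddCommGroup Γ] {φ : Γ →+ ℝ} {f g : Γ → ℂ}

lemma exists_forall_le (hf : NovikovCond φ f) : ∃ c : ℝ, ∀ γ, f γ ≠ 0 → c ≤ φ γ := by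
  obtain ⟨c, hc⟩ := ((hf 0).image φ).bddBelow
  refine ⟨min c 0, fun γ hγ => ?_⟩
  rcases le_or_gt (φ γ) 0 with h | h
  · exact (min_le_left _ _).trans (hc ⟨γ, ⟨hγ, h⟩, rfl⟩)
  · exact (min_le_right _ _).trans h.le

lemma finite_support_mul_sub (hf : NovikovCond φ f) (hg : NovikovCond φ g) (γ : Γ) :
    (support fun a => f a * g (γ - a)).Finite := by
  obtain ⟨c, hc⟩ := hg.exists_forall_le
  refine (hf (φ γ - c)).subset fun a ha => ?_
  rw [mem_support, mul_ne_zero_iff] at ha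
  have := hc _ ha.2
  rw [map_sub] at this
  exact ⟨ha.1, by linarith⟩

lemma single [DecidableEq Γ] : NovikovCond φ (fun γ => if γ = 0 then 1 else 0) :=
  fun _ => (Set.finite_singleton 0).subset fun γ ⟨hγ, _⟩ => by simpa using hγ

lemma add (hf : NovikovCond φ f) (hg : NovikovCond φ g) :
    NovikovCond φ (fun γ => f γ + g γ) := by
  refine fun R => ((hf R).union (hg R)).subset fun γ ⟨hγ, hR⟩ => ?_
  have : f γ ≠ 0 ∨ g γ ≠ 0 := by
    by_contra! h
    exact hγ (by simp only [h.1, h.2, add_zero])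
  exact this.imp (⟨·, hR⟩) (⟨·, hR⟩)

lemma neg (hf : NovikovCond φ f) : NovikovCond φ (fun γ => -f γ) := by
  simpa only [NovikovCond, ne_eq, neg_eq_zero] using hf

lemma conv (hf : NovikovCond φ f) (hg : NovikovCond φ g) : NovikovCond φ (novConv f g) := by
  intro R
  obtain ⟨cf, hcf⟩ := hf.exists_forall_le
  obtain ⟨cg, hcg⟩ := hg.exists_forall_le
  refine ((hf (R - cg)).image2 (· + ·) (hg (R - cf))).subset fun γ ⟨hγ, hR⟩ => ?_
  obtain ⟨a, ha⟩ : ∃ a, f a * g (γ - a) ≠ 0 := by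
    by_contra! h
    exact hγ (finsum_eq_zero_of_forall_eq_zero h)
  rw [mul_ne_zero_iff] at ha
  have hfa := hcf _ ha.1
  have hgb := hcg _ ha.2
  rw [map_sub] at hgb
  exact ⟨a, ⟨ha.1, by linarith⟩, γ - a, ⟨ha.2, by rw [map_sub]; linarith⟩, add_sub_cancel a γ⟩

lemma hasSum_novConv (hf : NovikovCond φ f) (hg : NovikovCond φ g) (γ : Γ) :
    HasSum (fun a => f a * g (γ - a)) (novConv f g γ) := by
  have hfin := hf.finite_support_mul_sub hg γ
  rw [novConv, finsum_eq_sum _ hfin]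
  exact hasSum_sum_of_ne_finset_zero fun a ha => notMem_support.mp (by simpa using ha)

end NovikovCond

section Convolution

variable {Γ : Type*} [AddCommGroup Γ] {φ : Γ →+ ℝ} {f g : Γ → ℂ}

lemma hasSum_novConv_mul {e : Γ → ℂ} (he : ∀ a b, e (a + b) = e a * e b)
    (hf : NovikovCond φ f) (hg : NovikovCond φ g)
    (hfe : Summable fun γ => f γ * e γ) (hge : Summable fun γ => g γ * e γ) :
    HasSum (fun γ => novConv f g γ * e γ) ((∑' γ, f γ * e γ) * ∑' γ, g γ * e γ) := by
  have hprod := hfe.hasSum.mul hge.hasSum <| summable_mul_of_summable_norm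
    (f := fun γ => f γ * e γ) (g := fun γ => g γ * e γ) hfe.norm hge.norm
  let shear : Γ × Γ ≃ Γ × Γ :=
    { toFun := fun p => (p.2, p.1 - p.2)
      invFun := fun p => (p.1 + p.2, p.1)
      left_inv := fun p => by simp
      right_inv := fun p => by simp }
  have hsheared : HasSum (fun p : Γ × Γ => f p.2 * g (p.1 - p.2) * e p.1)
      ((∑' γ, f γ * e γ) * ∑' γ, g γ * e γ) := by
    refine (shear.hasSum_iff.mpr hprod).congr_fun fun p => ?_
    change _ = f p.2 * e p.2 * (g (p.1 - p.2) * e (p.1 - p.2))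
    rw [mul_mul_mul_comm, ← he, add_sub_cancel]
  exact hsheared.prod_fiberwise fun γ => (hf.hasSum_novConv hg γ).mul_right (e γ)

end Convolution

lemma Complex.exp_neg_mul_map_add {Γ : Type*} [AddCommGroup Γ] (φ : Γ →+ ℝ) (s : ℂ) (a b : Γ) :
    exp (-s * (φ (a + b) : ℂ)) = exp (-s * (φ a : ℂ)) * exp (-s * (φ b : ℂ)) := by
  rw [← exp_add, map_add, ofReal_add, mul_add]

namespace InLam'

variable {Γ : Type*} [AddCommGroup Γ] {φ : Γ →+ ℝ} {ρ : ℝ} {f g : Γ → ℂ}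

lemma single [DecidableEq Γ] : InLam' φ ρ (fun γ => if γ = 0 then 1 else 0) :=
  ⟨NovikovCond.single, fun _ _ => summable_of_ne_finset_zero (s := {0}) fun γ hγ => by
    simp [Finset.mem_singleton.not.mp hγ]⟩

lemma add (hf : InLam' φ ρ f) (hg : InLam' φ ρ g) : InLam' φ ρ (fun γ => f γ + g γ) :=
  ⟨hf.1.add hg.1, fun s hs => by simpa only [add_mul] using (hf.2 s hs).add (hg.2 s hs)⟩

lemma neg (hf : InLam' φ ρ f) : InLam' φ ρ (fun γ => -f γ) :=
  ⟨hf.1.neg, fun s hs => by simpa only [neg_mul] using (hf.2 s hs).neg⟩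

lemma hasSum_novConv_mul_exp {s : ℂ} (hs : ρ < s.re) (hf : InLam' φ ρ f) (hg : InLam' φ ρ g) :
    HasSum (fun γ => novConv f g γ * Complex.exp (-s * (φ γ : ℂ))) (novEv φ s f * novEv φ s g) :=
  hasSum_novConv_mul (Complex.exp_neg_mul_map_add φ s) hf.1 hg.1 (hf.2 s hs) (hg.2 s hs)

lemma conv (hf : InLam' φ ρ f) (hg : InLam' φ ρ g) : InLam' φ ρ (novConv f g) :=
  ⟨hf.1.conv hg.1, fun _ hs => (hasSum_novConv_mul_exp hs hf hg).summable⟩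

end InLam'

section Evaluation

variable {Γ : Type*} [AddCommGroup Γ] (φ : Γ →+ ℝ) (s : ℂ)

lemma novEv_single [DecidableEq Γ] : novEv φ s (fun γ => if γ = 0 then 1 else 0) = 1 := by
  rw [novEv, tsum_eq_single 0 fun γ hγ => by simp [hγ]]
  simp

lemma novEv_add {f g : Γ → ℂ} (hf : Summable fun γ => f γ * Complex.exp (-s * (φ γ : ℂ)))
    (hg : Summable fun γ => g γ * Complex.exp (-s * (φ γ : ℂ))) :
    novEv φ s (fun γ => f γ + g γ) = novEv φ s f + novEv φ s g := by
  simp only [novEv, add_mul, hf.tsum_add hg]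

end Evaluation

theorem stmt_4_general {Γ : Type*} [AddCommGroup Γ] [DecidableEq Γ]
    (φ : Γ →+ ℝ) (ρ : ℝ) :
    InLam' φ ρ (fun γ => if γ = 0 then 1 else 0) ∧
    (∀ f g : Γ → ℂ, InLam' φ ρ f → InLam' φ ρ g →
      InLam' φ ρ (fun γ => f γ + g γ) ∧ InLam' φ ρ (novConv f g)) ∧
    (∀ f : Γ → ℂ, InLam' φ ρ f → InLam' φ ρ (fun γ => -f γ)) ∧
    (∀ s : ℂ, ρ < s.re →
      (novEv φ s (fun γ => if γ = 0 then 1 else 0) = 1) ∧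
      (∀ f g : Γ → ℂ, InLam' φ ρ f → InLam' φ ρ g →
        novEv φ s (fun γ => f γ + g γ) = novEv φ s f + novEv φ s g ∧
        novEv φ s (novConv f g) = novEv φ s f * novEv φ s g)) :=
  ⟨InLam'.single, fun _ _ hf hg => ⟨hf.add hg, hf.conv hg⟩, fun _ hf => hf.neg,
    fun s hs => ⟨novEv_single φ s, fun _ _ hf hg =>
      ⟨novEv_add φ s (hf.2 s hs) (hg.2 s hs), (InLam'.hasSum_novConv_mul_exp hs hf hg).tsum_eq⟩⟩⟩

theorem stmt_4 {Γ : Type*} [AddCommGroup Γ] [DecidableEq Γ] (r : ℕ) (b : Module.Basis (Fin r) ℤ Γ)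
    (φ : Γ →+ ℝ) (hφ : Function.Injective φ) (ρ : ℝ) :
    InLam' φ ρ (fun γ => if γ = 0 then 1 else 0) ∧
    (∀ f g : Γ → ℂ, InLam' φ ρ f → InLam' φ ρ g →
      InLam' φ ρ (fun γ => f γ + g γ) ∧ InLam' φ ρ (novConv f g)) ∧
    (∀ f : Γ → ℂ, InLam' φ ρ f → InLam' φ ρ (fun γ => -f γ)) ∧
    (∀ s : ℂ, ρ < s.re →
      (novEv φ s (fun γ => if γ = 0 then 1 else 0) = 1) ∧
      (∀ f g : Γ → ℂ, InLam' φ ρ f → InLam' φ ρ g →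
        novEv φ s (fun γ => f γ + g γ) = novEv φ s f + novEv φ s g ∧
        novEv φ s (novConv f g) = novEv φ s f * novEv φ s g)) :=
  stmt_4_general φ ρ
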